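/- If P is a full-dimensional perfectly centered polytope in ℝ^d, then its dual polytope P* is also perfectly centered. -/

import Mathlib

open Pointwise RealInnerProductSpace

noncomputable section

abbrev E (d : ℕ) : Type := EuclideanSpace ℝ (Fin d)

def IsPolytope {d : ℕ} (P : Set (E d)) : Prop :=
  ∃ V : Finset (E d), V.Nonempty ∧ P = convexHull ℝ (V : Set (E d))

def maximizers {d : ℕ} (P : Set (E d)) (c : E d) : Set (E d) :=
  {x ∈ P | ∀ y ∈ P, ⟪y, c⟫ ≤ ⟪x, c⟫}

def IsFace {d : ℕ} (P F : Set (E d)) : Prop :=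
  F = ∅ ∨ F = P ∨ ∃ c : E d, c ≠ 0 ∧ F = maximizers P c

def IsNontrivialFace {d : ℕ} (P F : Set (E d)) : Prop :=
  IsFace P F ∧ F ≠ ∅ ∧ F ≠ P

def polarDual {d : ℕ} (P : Set (E d)) : Set (E d) :=
  {x | ∀ y ∈ P, ⟪x, y⟫ ≤ 1}

def dualFace {d : ℕ} (P F : Set (E d)) : Set (E d) :=
  {x ∈ polarDual P | ∀ f ∈ F, ⟪x, f⟫ = 1}

def normalCone {d : ℕ} (P F : Set (E d)) : Set (E d) :=
  {c | maximizers P c = F}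

def IsPerfectlyCentered {d : ℕ} (P : Set (E d)) : Prop :=
  ∀ F : Set (E d), IsFace P F → F.Nonempty →
    (intrinsicInterior ℝ F ∩ normalCone P F).Nonempty

def dimSet {d : ℕ} (F : Set (E d)) : ℕ :=
  Module.finrank ℝ (affineSpan ℝ F).direction

def fVec {d : ℕ} (P : Set (E d)) (k : ℕ) : ℕ :=
  {F : Set (E d) | IsFace P F ∧ F.Nonempty ∧ dimSet F = k}.ncard

/-!
Let `w` lie in the relative interior of a nonempty face `F'` of `P*` exposed by `c ≠ 0`, and let
`G` be the face of `P` exposed by `w`. Pushing `w` slightly inside `P*` (which only has to be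
checked at the finitely many vertices of `P`) shows that `F'` is exactly the set of points of `P*`
that equal `1` on `G`. Perfect centering gives `x ∈ relint G` exposing `G`; since `x` is relatively
interior, `F' = {v ∈ P* | ⟪v, x⟫ = 1}`, which is exposed by `x / ‖x‖²`, and the same vertex
argument puts `x / ‖x‖²` in the relative interior of `F'`. The face `P*` itself contains `0` in
its interior because `P` is bounded.
-/

section IntrinsicInterior

variable {X : Type*} [NormedAddCommGroup X] [NormedSpace ℝ X] {s : Set X} {x y : X}

theorem mem_intrinsicInterior_iff_dist (hx : x ∈ s) :
    x ∈ intrinsicInterior ℝ s ↔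
      ∃ ε > 0, ∀ z ∈ affineSpan ℝ s, dist z x < ε → z ∈ s := by
  constructor
  · rintro ⟨p, hp, rfl⟩
    obtain ⟨ε, hε, hball⟩ := Metric.mem_nhds_iff.1 (mem_interior_iff_mem_nhds.1 hp)
    exact ⟨ε, hε, fun z hz hdist => hball (show (⟨z, hz⟩ : affineSpan ℝ s) ∈ _ from hdist)⟩
  · rintro ⟨ε, hε, h⟩
    refine ⟨⟨x, subset_affineSpan ℝ s hx⟩, ?_, rfl⟩
    exact mem_interior_iff_mem_nhds.2 <|
      Metric.mem_nhds_iff.2 ⟨ε, hε, fun z hz => h z z.2 hz⟩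

theorem exists_pos_add_smul_sub_mem_of_mem_intrinsicInterior
    (hx : x ∈ intrinsicInterior ℝ s) (hy : y ∈ s) : ∃ t : ℝ, 0 < t ∧ x + t • (x - y) ∈ s := by
  have hxs : x ∈ s := intrinsicInterior_subset hx
  obtain ⟨ε, hε, h⟩ := (mem_intrinsicInterior_iff_dist hxs).1 hx
  obtain rfl | hxy := eq_or_ne x y
  · exact ⟨1, one_pos, by simpa using hxs⟩
  have hnorm : 0 < ‖x - y‖ := norm_pos_iff.2 (sub_ne_zero.2 hxy)
  set t := ε / (2 * ‖x - y‖)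
  have ht : 0 < t := by positivity
  refine ⟨t, ht, h _ ?_ ?_⟩
  · simpa [add_comm x] using AffineSubspace.smul_vsub_vadd_mem _ t
      (subset_affineSpan ℝ s hxs) (subset_affineSpan ℝ s hy) (subset_affineSpan ℝ s hxs)
  · rw [dist_eq_norm, add_sub_cancel_left, norm_smul, Real.norm_of_nonneg ht.le]
    calc t * ‖x - y‖ = ε / 2 := by simp only [t]; field_simp
      _ < ε := half_lt_self hε

theorem Convex.combo_intrinsicInterior_self_mem_intrinsicInterior (hs : Convex ℝ s)
    (hx : x ∈ intrinsicInterior ℝ s) (hy : y ∈ s) {a b : ℝ} (ha : 0 < a) (hb : 0 ≤ b)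
    (hab : a + b = 1) : a • x + b • y ∈ intrinsicInterior ℝ s := by
  have hxs : x ∈ s := intrinsicInterior_subset hx
  obtain ⟨ε, hε, h⟩ := (mem_intrinsicInterior_iff_dist hxs).1 hx
  have hp : a • x + b • y ∈ s := hs hxs hy ha.le hb hab
  refine (mem_intrinsicInterior_iff_dist hp).2 ⟨a * ε, by positivity, fun z hz hdist => ?_⟩
  -- `z` is the same combination of `y` and a point `x'` near `x`.
  set x' := x + a⁻¹ • (z - (a • x + b • y))
  have hx' : x' ∈ s := by
    refine h x' ?_ ?_
    · simpa [x', add_comm x] using AffineSubspace.smul_vsub_vadd_mem _ a⁻¹ hz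
        (subset_affineSpan ℝ s hp) (subset_affineSpan ℝ s hxs)
    · rw [dist_eq_norm, add_sub_cancel_left, norm_smul, Real.norm_of_nonneg (inv_nonneg.2 ha.le),
        ← dist_eq_norm, inv_mul_lt_iff₀ ha]
      exact hdist
  have hz : z = a • x' + b • y := by
    simp only [x', smul_add, smul_smul, mul_inv_cancel₀ ha.ne', one_smul]
    abel
  exact hz ▸ hs hx' hy ha.le hb hab

end IntrinsicInterior

theorem inner_eq_of_mem_intrinsicInterior {X : Type*} [NormedAddCommGroup X]
    [InnerProductSpace ℝ X] {s : Set X} {v x y : X} {a : ℝ} (hle : ∀ z ∈ s, ⟪v, z⟫ ≤ a)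
    (hx : x ∈ intrinsicInterior ℝ s) (hxa : ⟪v, x⟫ = a) (hy : y ∈ s) : ⟪v, y⟫ = a := by
  obtain ⟨t, ht, hz⟩ := exists_pos_add_smul_sub_mem_of_mem_intrinsicInterior hx hy
  have := hle _ hz
  rw [inner_add_right, real_inner_smul_right, inner_sub_right, hxa] at this
  nlinarith [hle y hy]

section PolarDual

variable {d : ℕ} {P F G : Set (E d)} {c v w x : E d}

theorem maximizers_zero (P : Set (E d)) : maximizers P 0 = P := by
  ext x
  simp [maximizers]

theorem maximizers_smul_of_pos {t : ℝ} (ht : 0 < t) : maximizers P (t • c) = maximizers P c := by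
  ext x
  simp [maximizers, real_inner_smul_right, mul_le_mul_iff_right₀ ht]

theorem isFace_maximizers (P : Set (E d)) (c : E d) : IsFace P (maximizers P c) := by
  obtain rfl | hc := eq_or_ne c 0
  · exact Or.inr (Or.inl (maximizers_zero P))
  · exact Or.inr (Or.inr ⟨c, hc, rfl⟩)

theorem convex_maximizers (hP : Convex ℝ P) (c : E d) : Convex ℝ (maximizers P c) := by
  rintro x ⟨hxP, hx⟩ y ⟨hyP, hy⟩ a b ha hb hab
  refine ⟨hP hxP hyP ha hb hab, fun z hz => ?_⟩
  rw [inner_add_left, real_inner_smul_left, real_inner_smul_left]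
  calc ⟪z, c⟫ = a * ⟪z, c⟫ + b * ⟪z, c⟫ := by rw [← add_mul, hab, one_mul]
    _ ≤ a * ⟪x, c⟫ + b * ⟪y, c⟫ :=
      add_le_add (mul_le_mul_of_nonneg_left (hx z hz) ha) (mul_le_mul_of_nonneg_left (hy z hz) hb)

theorem convex_polarDual (P : Set (E d)) : Convex ℝ (polarDual P) := by
  intro x hx y hy a b ha hb hab z hz
  rw [inner_add_left, real_inner_smul_left, real_inner_smul_left]
  nlinarith [hx z hz, hy z hz]

theorem convex_dualFace (P F : Set (E d)) : Convex ℝ (dualFace P F) := by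
  rintro x ⟨hxP, hx⟩ y ⟨hyP, hy⟩ a b ha hb hab
  refine ⟨convex_polarDual P hxP hyP ha hb hab, fun f hf => ?_⟩
  rw [inner_add_left, real_inner_smul_left, real_inner_smul_left, hx f hf, hy f hf]
  simpa using hab

theorem polarDual_convexHull (s : Set (E d)) : polarDual (convexHull ℝ s) = polarDual s := by
  refine Set.Subset.antisymm (fun q hq y hy => hq y (subset_convexHull ℝ s hy))
    fun q hq y hy => convexHull_min hq ?_ hy
  exact convex_halfSpace_le ⟨fun _ _ => inner_add_right _ _ _,
    fun _ _ => real_inner_smul_right _ _ _⟩ 1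

theorem zero_mem_interior_polarDual (hP : Bornology.IsBounded P) :
    (0 : E d) ∈ interior (polarDual P) := by
  obtain ⟨R, hR, hPR⟩ := hP.exists_pos_norm_le
  refine mem_interior_iff_mem_nhds.2 (Filter.mem_of_superset (Metric.ball_mem_nhds 0
    (inv_pos.2 hR)) fun q hq y hy => ?_)
  rw [mem_ball_zero_iff] at hq
  calc ⟪q, y⟫ ≤ ‖q‖ * ‖y‖ := real_inner_le_norm q y
    _ ≤ R⁻¹ * R := by gcongr; exact hPR y hy
    _ = 1 := inv_mul_cancel₀ hR.ne'

theorem dualFace_anti (h : F ⊆ G) : dualFace P G ⊆ dualFace P F :=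
  fun _ hv => ⟨hv.1, fun f hf => hv.2 f (h hf)⟩

theorem dualFace_singleton_of_mem_intrinsicInterior (hF : F ⊆ P)
    (hx : x ∈ intrinsicInterior ℝ F) : dualFace P {x} = dualFace P F := by
  refine Set.Subset.antisymm (fun v hv => ⟨hv.1, fun f hf => ?_⟩)
    (dualFace_anti (Set.singleton_subset_iff.2 (intrinsicInterior_subset hx)))
  exact inner_eq_of_mem_intrinsicInterior (fun z hz => hv.1 z (hF hz)) hx (hv.2 x rfl) hf

theorem mem_maximizers_of_inner_eq_one (hw : w ∈ polarDual P) (hv : v ∈ P)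
    (hwv : ⟪w, v⟫ = 1) : v ∈ maximizers P w :=
  ⟨hv, fun y hy => by rw [real_inner_comm, real_inner_comm w, hwv]; exact hw y hy⟩

theorem inner_eq_one_of_mem_maximizers (hw : w ∈ polarDual P) (hv : v ∈ P)
    (hwv : ⟪w, v⟫ = 1) {y : E d} (hy : y ∈ maximizers P w) : ⟪w, y⟫ = 1 := by
  refine le_antisymm (hw y hy.1) ?_
  rw [← hwv, real_inner_comm v, real_inner_comm y]
  exact hy.2 v hv

theorem maximizers_polarDual_eq_dualFace_singleton (hx : x ∈ P) (hw : w ∈ polarDual P)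
    (hwx : ⟪w, x⟫ = 1) : maximizers (polarDual P) x = dualFace P {x} := by
  ext v
  simp only [maximizers, dualFace, Set.mem_singleton_iff, forall_eq, Set.mem_ofPred_eq]
  refine and_congr_right fun hv => ⟨fun h => le_antisymm (hv x hx) (hwx ▸ h w hw), ?_⟩
  intro h y hy
  rw [h]
  exact hy x hx

theorem inner_inv_norm_sq_smul_self (hx : x ≠ 0) : ⟪(‖x‖ ^ 2)⁻¹ • x, x⟫ = 1 := by
  rw [real_inner_smul_left, real_inner_self_eq_norm_sq]
  exact inv_mul_cancel₀ (by positivity)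

theorem inv_norm_sq_smul_mem_polarDual (hx : x ∈ maximizers P x) :
    (‖x‖ ^ 2)⁻¹ • x ∈ polarDual P := fun y hy => by
  rw [real_inner_smul_left, real_inner_comm, ← real_inner_self_eq_norm_sq]
  exact inv_mul_le_one_of_le₀ (hx.2 y hy) real_inner_self_nonneg

theorem maximizers_polarDual_inv_norm_sq_smul (hx : x ∈ maximizers P x) (hx0 : x ≠ 0) :
    maximizers (polarDual P) ((‖x‖ ^ 2)⁻¹ • x) = dualFace P {x} := by
  rw [maximizers_smul_of_pos (by positivity)]
  exact maximizers_polarDual_eq_dualFace_singleton hx.1 (inv_norm_sq_smul_mem_polarDual hx)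
    (inner_inv_norm_sq_smul_self hx0)

end PolarDual

section PolarDualOfPolytope

open Filter Topology

variable {d : ℕ} {s : Set (E d)} {c w x : E d}

theorem exists_pos_add_smul_mem_polarDual_convexHull (hs : s.Finite) {q r : E d}
    (hq : q ∈ polarDual (convexHull ℝ s)) (h : ∀ v ∈ s, ⟪q, v⟫ = 1 → ⟪r, v⟫ ≤ 0) :
    ∃ ε : ℝ, 0 < ε ∧ q + ε • r ∈ polarDual (convexHull ℝ s) := by
  rw [polarDual_convexHull] at hq ⊢
  have hev : ∀ v ∈ s, ∀ᶠ ε in 𝓝[>] (0 : ℝ), ⟪q + ε • r, v⟫ ≤ 1 := by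
    intro v hv
    simp only [inner_add_left, real_inner_smul_left]
    rcases (hq v hv).eq_or_lt with h1 | h1
    · filter_upwards [self_mem_nhdsWithin] with ε (hε : 0 < ε)
      nlinarith [h v hv h1]
    · have hcont : Continuous fun ε : ℝ => ⟪q, v⟫ + ε * ⟪r, v⟫ := by fun_prop
      have := (hcont.tendsto' 0 _ (by simp)).eventually (gt_mem_nhds h1)
      exact (eventually_nhdsWithin_of_eventually_nhds this).mono fun _ => le_of_lt
  obtain ⟨ε, hε, hpos⟩ := ((hs.eventually_all.2 hev).and self_mem_nhdsWithin).exists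
  exact ⟨ε, hpos, hε⟩

theorem exists_inner_eq_one_of_mem_maximizers_polarDual (hs : s.Finite) (hc : c ≠ 0)
    (hw : w ∈ maximizers (polarDual (convexHull ℝ s)) c) : ∃ v ∈ s, ⟪w, v⟫ = 1 := by
  by_contra! h
  obtain ⟨ε, hε, hmem⟩ :=
    exists_pos_add_smul_mem_polarDual_convexHull hs hw.1 (r := c) fun v hv h1 => (h v hv h1).elim
  have := hw.2 _ hmem
  rw [inner_add_left, real_inner_smul_left, real_inner_self_eq_norm_sq] at this
  have : 0 < ‖c‖ ^ 2 := by positivity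
  nlinarith

theorem maximizers_polarDual_eq_dualFace_maximizers (hs : s.Finite) (hc : c ≠ 0)
    (hw : w ∈ intrinsicInterior ℝ (maximizers (polarDual (convexHull ℝ s)) c)) :
    maximizers (polarDual (convexHull ℝ s)) c =
      dualFace (convexHull ℝ s) (maximizers (convexHull ℝ s) w) := by
  have hwF' := intrinsicInterior_subset hw
  obtain ⟨v₀, hv₀, hwv₀⟩ := exists_inner_eq_one_of_mem_maximizers_polarDual hs hc hwF'
  have hw1 : ∀ g ∈ maximizers (convexHull ℝ s) w, ⟪w, g⟫ = 1 := fun g hg =>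
    inner_eq_one_of_mem_maximizers hwF'.1 (subset_convexHull ℝ s hv₀) hwv₀ hg
  ext v
  constructor
  · intro hv
    refine ⟨hv.1, fun g hg => ?_⟩
    rw [real_inner_comm]
    refine inner_eq_of_mem_intrinsicInterior (fun z hz => ?_) hw ?_ hv
    · rw [real_inner_comm]; exact hz.1 g hg.1
    · rw [real_inner_comm]; exact hw1 g hg
  · rintro ⟨hvP, hv1⟩
    refine ⟨hvP, fun y hy => (hwF'.2 y hy).trans ?_⟩
    -- `w` can be pushed away from `v` without leaving the polar dual.
    obtain ⟨ε, hε, hmem⟩ := exists_pos_add_smul_mem_polarDual_convexHull hs hwF'.1 (r := w - v)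
      fun y hy h1 => by
        rw [inner_sub_left, h1,
          hv1 y (mem_maximizers_of_inner_eq_one hwF'.1 (subset_convexHull ℝ s hy) h1), sub_self]
    have := hwF'.2 _ hmem
    rw [inner_add_left, real_inner_smul_left, inner_sub_left] at this
    nlinarith

theorem mem_intrinsicInterior_dualFace_convexHull (hs : s.Finite) {F : Set (E d)} {u : E d}
    (hu : u ∈ dualFace (convexHull ℝ s) F)
    (hw : w ∈ intrinsicInterior ℝ (dualFace (convexHull ℝ s) F))
    (htight : ∀ v ∈ s, ⟪u, v⟫ = 1 → ⟪w, v⟫ = 1) :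
    u ∈ intrinsicInterior ℝ (dualFace (convexHull ℝ s) F) := by
  have hwF := intrinsicInterior_subset hw
  obtain ⟨δ, hδ, hmem⟩ := exists_pos_add_smul_mem_polarDual_convexHull hs hu.1 (r := u - w)
    fun v hv h1 => by rw [inner_sub_left, h1, htight v hv h1, sub_self]
  have hmem' : u + δ • (u - w) ∈ dualFace (convexHull ℝ s) F := by
    refine ⟨hmem, fun f hf => ?_⟩
    rw [inner_add_left, real_inner_smul_left, inner_sub_left, hu.2 f hf, hwF.2 f hf]
    ring
  -- `u` lies strictly between the relative interior point `w` and the point `u + δ • (u - w)`.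
  have := (convex_dualFace _ _).combo_intrinsicInterior_self_mem_intrinsicInterior hw hmem'
    (a := δ / (1 + δ)) (b := (1 + δ)⁻¹) (by positivity) (by positivity) (by field_simp; ring)
  convert this using 1
  match_scalars
  · field_simp
  · field_simp; ring

theorem inv_norm_sq_smul_mem_intrinsicInterior_dualFace (hs : s.Finite)
    (hx : x ∈ maximizers (convexHull ℝ s) x) (hx0 : x ≠ 0)
    (hw : w ∈ intrinsicInterior ℝ (dualFace (convexHull ℝ s) {x}))
    (hwx : w ∈ dualFace (convexHull ℝ s) (maximizers (convexHull ℝ s) x)) :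
    (‖x‖ ^ 2)⁻¹ • x ∈ intrinsicInterior ℝ (dualFace (convexHull ℝ s) {x}) := by
  have hu := inv_norm_sq_smul_mem_polarDual hx
  refine mem_intrinsicInterior_dualFace_convexHull hs
    ⟨hu, by rintro _ rfl; exact inner_inv_norm_sq_smul_self hx0⟩ hw fun v hv h1 => hwx.2 v ?_
  rw [← maximizers_smul_of_pos (t := (‖x‖ ^ 2)⁻¹) (by positivity)]
  exact mem_maximizers_of_inner_eq_one hu (subset_convexHull ℝ s hv) h1

end PolarDualOfPolytope

theorem dual_of_perfectlyCentered_is_perfectlyCentered_general {d : ℕ} (P : Set (E d))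
    (hP : IsPolytope P) (hpc : IsPerfectlyCentered P) :
    IsPerfectlyCentered (polarDual P) := by
  obtain ⟨V, -, rfl⟩ := hP
  have hV := V.finite_toSet
  rintro F' (rfl | rfl | ⟨c, hc, rfl⟩) hF'
  · exact absurd hF' Set.not_nonempty_empty
  · exact ⟨0, interior_subset_intrinsicInterior <| zero_mem_interior_polarDual
      (hV.isCompact_convexHull ℝ).isBounded, maximizers_zero _⟩
  obtain ⟨w, hw⟩ := hF'.intrinsicInterior (convex_maximizers (convex_polarDual _) c)
  have hwF' := intrinsicInterior_subset hw
  obtain ⟨v, hvV, hwv⟩ := exists_inner_eq_one_of_mem_maximizers_polarDual hV hc hwF'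
  obtain ⟨x, hxG, hxN⟩ := hpc _ (isFace_maximizers _ w)
    ⟨v, mem_maximizers_of_inner_eq_one hwF'.1 (subset_convexHull ℝ _ hvV) hwv⟩
  replace hxN : maximizers _ x = _ := hxN
  have hxx : x ∈ maximizers _ x := hxN ▸ intrinsicInterior_subset hxG
  have hF'G := maximizers_polarDual_eq_dualFace_maximizers hV hc hw
  have hF'x := hF'G.trans (dualFace_singleton_of_mem_intrinsicInterior (fun _ hy => hy.1) hxG).symm
  have hx0 : x ≠ 0 := by
    rintro rfl
    simpa using (hF'x ▸ hwF' : w ∈ dualFace _ {0}).2 0 rfl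
  have hwx := hF'G ▸ hwF'
  rw [← hxN] at hwx
  rw [hF'x] at hw ⊢
  exact ⟨_, inv_norm_sq_smul_mem_intrinsicInterior_dualFace hV hxx hx0 hw hwx,
    maximizers_polarDual_inv_norm_sq_smul hxx hx0⟩

theorem dual_of_perfectlyCentered_is_perfectlyCentered {d : ℕ} (P : Set (E d))
    (hP : IsPolytope P) (hfull : affineSpan ℝ P = ⊤)
    (hpc : IsPerfectlyCentered P) :
    IsPerfectlyCentered (polarDual P) :=
  dual_of_perfectlyCentered_is_perfectlyCentered_general P hP hpc
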